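/- arXiv:0704.2838 — 2 statements merged into one kernel-verified Lean document; each statement's English description precedes it below -/
import Mathlib

section
/- The 3-dimensional subspace W = span(ṽ_0, ṽ_1, ṽ_2) of ℂ³⊗ℂ³ is invariant under the six operators Δ(X_0^+), Δ(X_0^-), Δ(X_1^+), Δ(X_1^-), Δ(K_0), Δ(K_1), and the linear isomorphism W → ℂ³ sending ṽ_r to w_r (r = 0,1,2) intertwines these operators with the representation ρ_{−aq}: explicitly, Δ(X_0^-)ṽ_0 = ṽ_1, Δ(X_0^-)ṽ_1 = ṽ_2, Δ(X_0^-)ṽ_2 = 0; Δ(X_0^+)ṽ_0 = 0, Δ(X_0^+)ṽ_1 = [2]_t ṽ_0, Δ(X_0^+)ṽ_2 = [2]_t ṽ_1; Δ(K_0)ṽ_0 = qṽ_0, Δ(K_0)ṽ_1 = ṽ_1, Δ(K_0)ṽ_2 = q^{-1}ṽ_2; Δ(X_1^+)ṽ_0 = [4]_t^{-1}·q·(−aq)(1+q²)·ṽ_2 and Δ(X_1^+)ṽ_1 = Δ(X_1^+)ṽ_2 = 0; Δ(X_1^-)ṽ_2 = [4]_t^{-1}·q^{-1}·[2]_t²·(−aq)^{-1}(1+q^{-2})·ṽ_0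 and Δ(X_1^-)ṽ_0 = Δ(X_1^-)ṽ_1 = 0; Δ(K_1)ṽ_0 = q^{-2}ṽ_0, Δ(K_1)ṽ_1 = ṽ_1, Δ(K_1)ṽ_2 = q²ṽ_2. In particular, the tensor product V_{aq²}⊗V_a of fundamental representations of the twisted quantum loop algebra of type A_2^{(2)} has a subrepresentation isomorphic to V_{−aq} (the key step in the computation of the twisted q-character of the Kirillov–Reshetikhin module W_{2,a}). -/
noncomputable section

open Kronecker

/-- The t-integer `[n]_t = (tⁿ - t⁻ⁿ)/(t - t⁻¹)`. -/
def tnum (t : ℂ) (n : ℕ) : ℂ := (t ^ n - t⁻¹ ^ n) / (t - t⁻¹)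

/-- The operator `X₀⁺` of the fundamental representation `ρ_c` on `ℂ³`. -/
def X0p (t : ℂ) : Matrix (Fin 3) (Fin 3) ℂ :=
  !![0, tnum t 2, 0; 0, 0, tnum t 2; 0, 0, 0]

/-- The operator `X₀⁻` of the fundamental representation `ρ_c` on `ℂ³`. -/
def X0m : Matrix (Fin 3) (Fin 3) ℂ :=
  !![0, 0, 0; 1, 0, 0; 0, 1, 0]

/-- The operator `K₀ = diag(q, 1, q⁻¹)`, with `q = t²`. -/
def K0 (t : ℂ) : Matrix (Fin 3) (Fin 3) ℂ :=
  !![t ^ 2, 0, 0; 0, 1, 0; 0, 0, (t ^ 2)⁻¹]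

/-- The operator `X₁⁺` of the fundamental representation `ρ_c` on `ℂ³`. -/
def X1p (t c : ℂ) : Matrix (Fin 3) (Fin 3) ℂ :=
  !![0, 0, 0; 0, 0, 0; (tnum t 4)⁻¹ * t ^ 2 * c * (1 + (t ^ 2) ^ 2), 0, 0]

/-- The operator `X₁⁻` of the fundamental representation `ρ_c` on `ℂ³`. -/
def X1m (t c : ℂ) : Matrix (Fin 3) (Fin 3) ℂ :=
  !![0, 0, (tnum t 4)⁻¹ * (t ^ 2)⁻¹ * (tnum t 2) ^ 2 * c⁻¹ * (1 + ((t ^ 2)⁻¹) ^ 2);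
     0, 0, 0; 0, 0, 0]

/-- The operator `K₁ = diag(q⁻², 1, q²)`, with `q = t²`. -/
def K1 (t : ℂ) : Matrix (Fin 3) (Fin 3) ℂ :=
  !![((t ^ 2) ^ 2)⁻¹, 0, 0; 0, 1, 0; 0, 0, (t ^ 2) ^ 2]

/-- Basis vectors of `ℂ³`. -/
def e (i : Fin 3) : Fin 3 → ℂ := Pi.single i 1

/-- The tensor product of two vectors of `ℂ³`, as a vector of `ℂ³ ⊗ ℂ³ ≅ ℂ^{3×3}`. -/
def tp (v w : Fin 3 → ℂ) : Fin 3 × Fin 3 → ℂ := fun p => v p.1 * w p.2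

/-- `Δ(K₀) = K₀ ⊗ K₀` acting on `V_{aq²} ⊗ V_a`. -/
def DK0 (t : ℂ) : Matrix (Fin 3 × Fin 3) (Fin 3 × Fin 3) ℂ := K0 t ⊗ₖ K0 t

/-- `Δ(K₁) = K₁ ⊗ K₁` acting on `V_{aq²} ⊗ V_a`. -/
def DK1 (t : ℂ) : Matrix (Fin 3 × Fin 3) (Fin 3 × Fin 3) ℂ := K1 t ⊗ₖ K1 t

/-- `Δ(X₀⁺) = X₀⁺ ⊗ 1 + K₀ ⊗ X₀⁺` acting on `V_{aq²} ⊗ V_a`. -/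
def DX0p (t : ℂ) : Matrix (Fin 3 × Fin 3) (Fin 3 × Fin 3) ℂ :=
  X0p t ⊗ₖ (1 : Matrix (Fin 3) (Fin 3) ℂ) + K0 t ⊗ₖ X0p t

/-- `Δ(X₀⁻) = X₀⁻ ⊗ K₀⁻¹ + 1 ⊗ X₀⁻` acting on `V_{aq²} ⊗ V_a`. -/
def DX0m (t : ℂ) : Matrix (Fin 3 × Fin 3) (Fin 3 × Fin 3) ℂ :=
  X0m ⊗ₖ (K0 t)⁻¹ + (1 : Matrix (Fin 3) (Fin 3) ℂ) ⊗ₖ X0m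

/-- `Δ(X₁⁺) = X₁⁺ ⊗ 1 + K₁ ⊗ X₁⁺` acting on `V_{aq²} ⊗ V_a`
(the first factor carries `ρ_{aq²}`, the second `ρ_a`). -/
def DX1p (t a : ℂ) : Matrix (Fin 3 × Fin 3) (Fin 3 × Fin 3) ℂ :=
  X1p t (a * (t ^ 2) ^ 2) ⊗ₖ (1 : Matrix (Fin 3) (Fin 3) ℂ) + K1 t ⊗ₖ X1p t a

/-- `Δ(X₁⁻) = X₁⁻ ⊗ K₁⁻¹ + 1 ⊗ X₁⁻` acting on `V_{aq²} ⊗ V_a`. -/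
def DX1m (t a : ℂ) : Matrix (Fin 3 × Fin 3) (Fin 3 × Fin 3) ℂ :=
  X1m t (a * (t ^ 2) ^ 2) ⊗ₖ (K1 t)⁻¹ + (1 : Matrix (Fin 3) (Fin 3) ℂ) ⊗ₖ X1m t a

/-- `ṽ₀ = v₀⊗v'₁ − q·v₁⊗v'₀`. -/
def w0 (t : ℂ) : Fin 3 × Fin 3 → ℂ := tp (e 0) (e 1) - t ^ 2 • tp (e 1) (e 0)

/-- `ṽ₁ = (1−q)·v₁⊗v'₁ + v₀⊗v'₂ − v₂⊗v'₀`. -/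
def w1 (t : ℂ) : Fin 3 × Fin 3 → ℂ :=
  (1 - t ^ 2) • tp (e 1) (e 1) + tp (e 0) (e 2) - tp (e 2) (e 0)

/-- `ṽ₂ = v₁⊗v'₂ − q·v₂⊗v'₁`. -/
def w2 (t : ℂ) : Fin 3 × Fin 3 → ℂ := tp (e 1) (e 2) - t ^ 2 • tp (e 2) (e 1)

/-! `Δ` acts on a pure tensor factorwise (the Kronecker product `A ⊗ₖ B` sends `v ⊗ w` to
`Av ⊗ Bw`), so each identity reduces to the action of `ρ` on the basis vectors followed by
collecting the coefficients of the `v_i ⊗ v'_j`. For the generators `X₁^±` the coefficients of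
`ρ_c` are proportional to `c^{±1}`; the two tensor factors contribute at the parameters `aq²` and
`a`, and these recombine into the parameter `-aq` through `a = -q⁻¹·(-aq)` and
`aq² = -q·(-aq)`. -/

open Matrix

theorem Matrix.kronecker_mulVec_elementary {R m n p r : Type*} [CommSemiring R] [Fintype n]
    [Fintype r] (A : Matrix m n R) (B : Matrix p r R) (v : n → R) (w : r → R) :
    (A ⊗ₖ B) *ᵥ (fun x => v x.1 * w x.2) = fun x => (A *ᵥ v) x.1 * (B *ᵥ w) x.2 := by
  ext ⟨i, j⟩
  simp only [mulVec, dotProduct, kroneckerMap_apply, Fintype.sum_prod_type, Finset.sum_mul_sum]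
  exact Finset.sum_congr rfl fun _ _ => Finset.sum_congr rfl fun _ _ => by ring

theorem Matrix.inv_fin_three_diagonal {K : Type*} [Field K] {x y z : K}
    (hx : x ≠ 0) (hy : y ≠ 0) (hz : z ≠ 0) :
    (!![x, 0, 0; 0, y, 0; 0, 0, z])⁻¹ = !![x⁻¹, 0, 0; 0, y⁻¹, 0; 0, 0, z⁻¹] := by
  refine inv_eq_left_inv ?_
  rw [mul_fin_three, one_fin_three]
  simp [hx, hy, hz]

section TensorVectors

variable (v w : Fin 3 → ℂ) (c : ℂ)

theorem tp_smul_left : tp (c • v) w = c • tp v w := by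
  ext; simp [tp, mul_assoc]

theorem tp_smul_right : tp v (c • w) = c • tp v w := by
  ext; simp [tp, mul_left_comm]

theorem tp_zero_left : tp 0 w = 0 := by
  ext; simp [tp]

theorem tp_zero_right : tp v 0 = 0 := by
  ext; simp [tp]

theorem kronecker_mulVec_tp (A B : Matrix (Fin 3) (Fin 3) ℂ) :
    (A ⊗ₖ B) *ᵥ tp v w = tp (A *ᵥ v) (B *ᵥ w) :=
  kronecker_mulVec_elementary A B v w

end TensorVectors

theorem mulVec_e (M : Matrix (Fin 3) (Fin 3) ℂ) (j : Fin 3) :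
    M *ᵥ e j = M 0 j • e 0 + M 1 j • e 1 + M 2 j • e 2 := by
  ext i; fin_cases i <;> simp [e]

section BasisAction

variable (t c : ℂ) (j : Fin 3)

theorem X0p_mulVec_e : X0p t *ᵥ e j = ![0, tnum t 2 • e 0, tnum t 2 • e 1] j := by
  rw [mulVec_e]; fin_cases j <;> simp [X0p]

theorem X0m_mulVec_e : X0m *ᵥ e j = ![e 1, e 2, 0] j := by
  rw [mulVec_e]; fin_cases j <;> simp [X0m]

theorem K0_mulVec_e : K0 t *ᵥ e j = ![t ^ 2 • e 0, e 1, (t ^ 2)⁻¹ • e 2] j := by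
  rw [mulVec_e]; fin_cases j <;> simp [K0]

theorem X1p_mulVec_e :
    X1p t c *ᵥ e j = ![((tnum t 4)⁻¹ * t ^ 2 * c * (1 + (t ^ 2) ^ 2)) • e 2, 0, 0] j := by
  rw [mulVec_e]; fin_cases j <;> simp [X1p]

theorem X1m_mulVec_e :
    X1m t c *ᵥ e j =
      ![0, 0, ((tnum t 4)⁻¹ * (t ^ 2)⁻¹ * (tnum t 2) ^ 2 * c⁻¹ * (1 + ((t ^ 2)⁻¹) ^ 2)) • e 0] j := by
  rw [mulVec_e]; fin_cases j <;> simp [X1m]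

theorem K1_mulVec_e : K1 t *ᵥ e j = ![((t ^ 2) ^ 2)⁻¹ • e 0, e 1, (t ^ 2) ^ 2 • e 2] j := by
  rw [mulVec_e]; fin_cases j <;> simp [K1]

variable {t}

theorem K0_inv_mulVec_e (ht : t ≠ 0) :
    (K0 t)⁻¹ *ᵥ e j = ![(t ^ 2)⁻¹ • e 0, e 1, t ^ 2 • e 2] j := by
  rw [K0, inv_fin_three_diagonal (by simpa) one_ne_zero (by simpa), mulVec_e]
  fin_cases j <;> simp

theorem K1_inv_mulVec_e (ht : t ≠ 0) :
    (K1 t)⁻¹ *ᵥ e j = ![(t ^ 2) ^ 2 • e 0, e 1, ((t ^ 2) ^ 2)⁻¹ • e 2] j := by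
  rw [K1, inv_fin_three_diagonal (by simpa) one_ne_zero (by simpa), mulVec_e]
  fin_cases j <;> simp

end BasisAction

section CoproductAction

variable {t : ℂ} (a : ℂ)

theorem DX0m_action (ht : t ≠ 0) :
    DX0m t *ᵥ w0 t = w1 t ∧ DX0m t *ᵥ w1 t = w2 t ∧ DX0m t *ᵥ w2 t = 0 := by
  refine ⟨?_, ?_, ?_⟩ <;>
  · simp only [DX0m, w0, w1, w2, add_mulVec, mulVec_sub, mulVec_add, mulVec_smul,
      kronecker_mulVec_tp, X0m_mulVec_e, K0_inv_mulVec_e _ ht, one_mulVec, cons_val_zero,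
      cons_val_one, cons_val_two, tail_cons, head_cons, tp_smul_right, tp_zero_left, tp_zero_right,
      smul_zero]
    match_scalars <;> field_simp <;> ring

theorem DX0p_action (ht : t ≠ 0) :
    DX0p t *ᵥ w0 t = 0 ∧ DX0p t *ᵥ w1 t = tnum t 2 • w0 t ∧
      DX0p t *ᵥ w2 t = tnum t 2 • w1 t := by
  refine ⟨?_, ?_, ?_⟩ <;>
  · simp only [DX0p, w0, w1, w2, add_mulVec, mulVec_sub, mulVec_add, mulVec_smul,
      kronecker_mulVec_tp, X0p_mulVec_e, K0_mulVec_e, one_mulVec, cons_val_zero, cons_val_one,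
      cons_val_two, tail_cons, head_cons, tp_smul_left, tp_smul_right, tp_zero_left, tp_zero_right]
    match_scalars <;> field_simp <;> ring

theorem DK0_action (ht : t ≠ 0) :
    DK0 t *ᵥ w0 t = t ^ 2 • w0 t ∧ DK0 t *ᵥ w1 t = w1 t ∧
      DK0 t *ᵥ w2 t = (t ^ 2)⁻¹ • w2 t := by
  refine ⟨?_, ?_, ?_⟩ <;>
  · simp only [DK0, w0, w1, w2, mulVec_sub, mulVec_add, mulVec_smul, kronecker_mulVec_tp,
      K0_mulVec_e, cons_val_zero, cons_val_one, cons_val_two, tail_cons, head_cons, tp_smul_left,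
      tp_smul_right]
    match_scalars <;> field_simp

theorem DX1p_action :
    DX1p t a *ᵥ w0 t =
        ((tnum t 4)⁻¹ * t ^ 2 * (-(a * t ^ 2)) * (1 + (t ^ 2) ^ 2)) • w2 t ∧
      DX1p t a *ᵥ w1 t = 0 ∧ DX1p t a *ᵥ w2 t = 0 := by
  refine ⟨?_, ?_, ?_⟩ <;>
  · simp only [DX1p, w0, w1, w2, add_mulVec, mulVec_sub, mulVec_add, mulVec_smul,
      kronecker_mulVec_tp, X1p_mulVec_e, K1_mulVec_e, one_mulVec, cons_val_zero, cons_val_one,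
      cons_val_two, tail_cons, head_cons, tp_smul_left, tp_smul_right, tp_zero_left, tp_zero_right]
    match_scalars <;> ring

theorem DX1m_action (ht : t ≠ 0) :
    DX1m t a *ᵥ w2 t = ((tnum t 4)⁻¹ * (t ^ 2)⁻¹ * (tnum t 2) ^ 2 * (-(a * t ^ 2))⁻¹ *
        (1 + ((t ^ 2)⁻¹) ^ 2)) • w0 t ∧
      DX1m t a *ᵥ w0 t = 0 ∧ DX1m t a *ᵥ w1 t = 0 := by
  refine ⟨?_, ?_, ?_⟩ <;>
  · simp only [DX1m, w0, w1, w2, add_mulVec, mulVec_sub, mulVec_add, mulVec_smul,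
      kronecker_mulVec_tp, X1m_mulVec_e, K1_inv_mulVec_e _ ht, one_mulVec, cons_val_zero,
      cons_val_one, cons_val_two, tail_cons, head_cons, tp_smul_left, tp_smul_right, tp_zero_left,
      tp_zero_right, smul_zero]
    match_scalars <;> field_simp <;> ring

theorem DK1_action (ht : t ≠ 0) :
    DK1 t *ᵥ w0 t = ((t ^ 2) ^ 2)⁻¹ • w0 t ∧ DK1 t *ᵥ w1 t = w1 t ∧
      DK1 t *ᵥ w2 t = (t ^ 2) ^ 2 • w2 t := by
  refine ⟨?_, ?_, ?_⟩ <;>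
  · simp only [DK1, w0, w1, w2, mulVec_sub, mulVec_add, mulVec_smul, kronecker_mulVec_tp,
      K1_mulVec_e, cons_val_zero, cons_val_one, cons_val_two, tail_cons, head_cons, tp_smul_left,
      tp_smul_right]
    match_scalars <;> field_simp

end CoproductAction

theorem subrep_Vmaq_general (t : ℂ) (ht0 : t ≠ 0)
    (a : ℂ) :
    (DX0m t).mulVec (w0 t) = w1 t
    ∧ (DX0m t).mulVec (w1 t) = w2 t
    ∧ (DX0m t).mulVec (w2 t) = 0
    ∧ (DX0p t).mulVec (w0 t) = 0
    ∧ (DX0p t).mulVec (w1 t) = tnum t 2 • w0 t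
    ∧ (DX0p t).mulVec (w2 t) = tnum t 2 • w1 t
    ∧ (DK0 t).mulVec (w0 t) = t ^ 2 • w0 t
    ∧ (DK0 t).mulVec (w1 t) = w1 t
    ∧ (DK0 t).mulVec (w2 t) = (t ^ 2)⁻¹ • w2 t
    ∧ (DX1p t a).mulVec (w0 t) =
        ((tnum t 4)⁻¹ * t ^ 2 * (-(a * t ^ 2)) * (1 + (t ^ 2) ^ 2)) • w2 t
    ∧ (DX1p t a).mulVec (w1 t) = 0
    ∧ (DX1p t a).mulVec (w2 t) = 0
    ∧ (DX1m t a).mulVec (w2 t) =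
        ((tnum t 4)⁻¹ * (t ^ 2)⁻¹ * (tnum t 2) ^ 2 * (-(a * t ^ 2))⁻¹ *
          (1 + ((t ^ 2)⁻¹) ^ 2)) • w0 t
    ∧ (DX1m t a).mulVec (w0 t) = 0
    ∧ (DX1m t a).mulVec (w1 t) = 0
    ∧ (DK1 t).mulVec (w0 t) = ((t ^ 2) ^ 2)⁻¹ • w0 t
    ∧ (DK1 t).mulVec (w1 t) = w1 t
    ∧ (DK1 t).mulVec (w2 t) = (t ^ 2) ^ 2 • w2 t := by
  obtain ⟨hX0m₀, hX0m₁, hX0m₂⟩ := DX0m_action ht0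
  obtain ⟨hX0p₀, hX0p₁, hX0p₂⟩ := DX0p_action ht0
  obtain ⟨hK0₀, hK0₁, hK0₂⟩ := DK0_action ht0
  obtain ⟨hX1p₀, hX1p₁, hX1p₂⟩ := DX1p_action (t := t) a
  obtain ⟨hX1m₂, hX1m₀, hX1m₁⟩ := DX1m_action a ht0
  obtain ⟨hK1₀, hK1₁, hK1₂⟩ := DK1_action ht0
  exact ⟨hX0m₀, hX0m₁, hX0m₂, hX0p₀, hX0p₁, hX0p₂, hK0₀, hK0₁, hK0₂, hX1p₀, hX1p₁, hX1p₂,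
    hX1m₂, hX1m₀, hX1m₁, hK1₀, hK1₁, hK1₂⟩

/-- The span of `ṽ₀, ṽ₁, ṽ₂` in `V_{aq²} ⊗ V_a` is invariant under the coproduct
operators, and `ṽ_r ↦ w_r` intertwines them with the fundamental representation
`ρ_{-aq}`: the tensor product `V_{aq²} ⊗ V_a` has a subrepresentation isomorphic to
`V_{-aq}`. -/
theorem subrep_Vmaq (t : ℂ) (ht0 : t ≠ 0) (ht : ∀ n : ℕ, 0 < n → t ^ n ≠ 1)
    (a : ℂ) (ha : a ≠ 0) :
    (DX0m t).mulVec (w0 t) = w1 t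
    ∧ (DX0m t).mulVec (w1 t) = w2 t
    ∧ (DX0m t).mulVec (w2 t) = 0
    ∧ (DX0p t).mulVec (w0 t) = 0
    ∧ (DX0p t).mulVec (w1 t) = tnum t 2 • w0 t
    ∧ (DX0p t).mulVec (w2 t) = tnum t 2 • w1 t
    ∧ (DK0 t).mulVec (w0 t) = t ^ 2 • w0 t
    ∧ (DK0 t).mulVec (w1 t) = w1 t
    ∧ (DK0 t).mulVec (w2 t) = (t ^ 2)⁻¹ • w2 t
    ∧ (DX1p t a).mulVec (w0 t) =
        ((tnum t 4)⁻¹ * t ^ 2 * (-(a * t ^ 2)) * (1 + (t ^ 2) ^ 2)) • w2 t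
    ∧ (DX1p t a).mulVec (w1 t) = 0
    ∧ (DX1p t a).mulVec (w2 t) = 0
    ∧ (DX1m t a).mulVec (w2 t) =
        ((tnum t 4)⁻¹ * (t ^ 2)⁻¹ * (tnum t 2) ^ 2 * (-(a * t ^ 2))⁻¹ *
          (1 + ((t ^ 2)⁻¹) ^ 2)) • w0 t
    ∧ (DX1m t a).mulVec (w0 t) = 0
    ∧ (DX1m t a).mulVec (w1 t) = 0
    ∧ (DK1 t).mulVec (w0 t) = ((t ^ 2) ^ 2)⁻¹ • w0 t
    ∧ (DK1 t).mulVec (w1 t) = w1 t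
    ∧ (DK1 t).mulVec (w2 t) = (t ^ 2) ^ 2 • w2 t :=
  subrep_Vmaq_general t ht0 a
end
end

section
/- For every k ≥ 1, every T ∈ Tab(1,k) and every a ∈ ℂ∖{0}, the monomial m^{(1)}_{T,a} = ∏_{p=1}^{k} ⟦T_p⟧_{aq^{2(p−1)}} is thin: z_{l,b}(m^{(1)}_{T,a}) ≤ 1 for every (l,b) ∈ {1,2}×(ℂ∖{0}). -/
noncomputable section

/-- The set `B = {1,2,3,4,4̄,3̄,2̄,1̄}`. -/
inductive BB : Type
  | b1 | b2 | b3 | b4 | b4' | b3' | b2' | b1'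
  deriving DecidableEq

instance : Fintype BB where
  elems := {.b1, .b2, .b3, .b4, .b4', .b3', .b2', .b1'}
  complete := fun x => by cases x <;> decide

/-- The rank used to define the partial order on `B`
(`4` and `4̄` get the same rank, making them incomparable). -/
def BB.rank : BB → ℕ
  | .b1 => 0 | .b2 => 1 | .b3 => 2 | .b4 => 3 | .b4' => 3
  | .b3' => 4 | .b2' => 5 | .b1' => 6

/-- The partial order `⪯` on `B` : `1 ≺ 2 ≺ 3 ≺ 4 ≺ 3̄ ≺ 2̄ ≺ 1̄` and `3 ≺ 4̄ ≺ 3̄`,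
with `4` and `4̄` incomparable. -/
def BB.le (x y : BB) : Prop := x = y ∨ x.rank < y.rank

/-- The strict order `≺` on `B`. -/
def BB.lt (x y : BB) : Prop := x.rank < y.rank

/-- Monomials: the free abelian group on `{1,2} × ℂˣ`, written additively;
`Finsupp.single (i,b) 1` corresponds to the generator `Z_{i+1,b}`. -/
abbrev Mon2 : Type := (Fin 2 × ℂˣ) →₀ ℤ

/-- The group ring `ℤ[G]`. -/
abbrev LR2 : Type := AddMonoidAlgebra ℤ Mon2

/-- The generator `Z_{i,b}` (with `i : Fin 2` indexing `{1,2}`). -/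
def Zv (i : Fin 2) (b : ℂˣ) : Mon2 := Finsupp.single (i, b) 1

/-- `j = e^{2iπ/3}`, a primitive cube root of unity, as a unit of `ℂ`. -/
def jC : ℂˣ := Units.mk0 (Complex.exp (2 * Real.pi * Complex.I / 3)) (Complex.exp_ne_zero _)

/-- The boxes `⟦α⟧_a ∈ G` for `α ∈ B` (written additively). -/
def box (q : ℂˣ) : BB → ℂˣ → Mon2
  | .b1, a => Zv 0 a
  | .b2, a => -Zv 0 (a * q ^ 2) + Zv 1 (a ^ 3 * q ^ 3)
  | .b3, a => -Zv 1 (a ^ 3 * q ^ 9) + Zv 0 (a * q ^ 2 * jC) + Zv 0 (a * q ^ 2 * jC ^ 2)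
  | .b4, a => Zv 0 (a * q ^ 2 * jC) - Zv 0 (a * q ^ 4 * jC ^ 2)
  | .b4', a => Zv 0 (a * q ^ 2 * jC ^ 2) - Zv 0 (a * q ^ 4 * jC)
  | .b3', a => -Zv 0 (a * q ^ 4 * jC) - Zv 0 (a * q ^ 4 * jC ^ 2) + Zv 1 (a ^ 3 * q ^ 9)
  | .b2', a => Zv 0 (a * q ^ 4) - Zv 1 (a ^ 3 * q ^ 15)
  | .b1', a => -Zv 0 (a * q ^ 6)

/-- `Tab(1,k)`: sequences `(T_1,…,T_k)` in `B` with `T_p ⪯ T_{p+1}`. -/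
def IsTab1 (k : ℕ) (T : Fin k → BB) : Prop :=
  ∀ (p : ℕ) (h : p + 1 < k), BB.le (T ⟨p, Nat.lt_of_succ_lt h⟩) (T ⟨p + 1, h⟩)

/-- The monomial `m^{(1)}_{T,a} = ∏_{p=1}^{k} ⟦T_p⟧_{aq^{2(p-1)}}` (written additively). -/
def m1 (q : ℂˣ) {k : ℕ} (T : Fin k → BB) (a : ℂˣ) : Mon2 :=
  ∑ p : Fin k, box q (T p) (a * q ^ (2 * (p : ℕ)))

/-- `Tab(2,k)`: two-row arrays with entries in `B` satisfying (θ1)–(θ4).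
Row `i : Fin 2` corresponds to row `i+1` of the paper. -/
def IsTab2 (k : ℕ) (T : Fin 2 → Fin k → BB) : Prop :=
  (∀ i : Fin 2, IsTab1 k (T i)) ∧
  (∀ p : Fin k, ¬ BB.le (T 1 p) (T 0 p)) ∧
  (¬ ∃ p p' : Fin k, p < p' ∧
      (∀ r : Fin k, p ≤ r → r < p' → T 0 r = BB.b3) ∧ T 0 p' = BB.b4 ∧
      T 1 p = BB.b4 ∧ (∀ r : Fin k, p < r → r ≤ p' → T 1 r = BB.b3')) ∧
  (¬ ∃ p p' : Fin k, p < p' ∧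
      (∀ r : Fin k, p ≤ r → r < p' → T 0 r = BB.b3) ∧ T 0 p' = BB.b4' ∧
      T 1 p = BB.b4' ∧ (∀ r : Fin k, p < r → r ≤ p' → T 1 r = BB.b3'))

/-- The monomial `m^{(2)}_{T,a} = ∏_{i∈{1,2}} ∏_{p=1}^{k} ⟦T_{i,p}⟧_{aq^{2(p-i)}}`
(written additively; rows and columns are 0-indexed). -/
def m2 (q : ℂˣ) {k : ℕ} (T : Fin 2 → Fin k → BB) (a : ℂˣ) : Mon2 :=
  ∑ i : Fin 2, ∑ p : Fin k, box q (T i p) (a * q ^ (2 * ((p : ℤ) - (i : ℤ))))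


/-!
Every box has all its exponents `≤ 1`, so it suffices that two different columns of the
tableau never contribute a positive exponent to the same variable. Measured on the scale
of node `2` (a node-`1` parameter `b` counts as `b³`, using `j³ = 1`), the positive variables
of the box `⟦α⟧_{aq^{2p}}` all sit at `a³ q^{6p + d}`, where `d ∈ {0, 3, 6, 9, 12}` depends only
on the node and weakly increases with `α`. Along a tableau the entries weakly increase, so
`6p + d` strictly increases with the column `p`, and since `q` is not a root of unity these
parameters are pairwise distinct.
-/

theorem Finset.sum_le_of_forall_le_of_pos_unique {ι M : Type*} [AddCommMonoid M] [LinearOrder M]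
    [IsOrderedAddMonoid M] {s : Finset ι} {f : ι → M} {c : M} (hc : 0 ≤ c)
    (hle : ∀ i ∈ s, f i ≤ c) (hpos : ∀ i ∈ s, ∀ j ∈ s, 0 < f i → 0 < f j → i = j) :
    ∑ i ∈ s, f i ≤ c := by
  classical
  by_cases h : ∃ i ∈ s, 0 < f i
  · obtain ⟨i, hi, hfi⟩ := h
    have hrest : ∑ j ∈ s.erase i, f j ≤ 0 := Finset.sum_nonpos fun j hj => not_lt.mp fun hfj =>
      Finset.ne_of_mem_erase hj (hpos j (Finset.mem_of_mem_erase hj) i hi hfj hfi)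
    rw [← Finset.add_sum_erase s f hi]
    simpa using add_le_add (hle i hi) hrest
  · push Not at h
    exact (Finset.sum_nonpos h).trans hc

lemma jC_isPrimitiveRoot : IsPrimitiveRoot jC 3 := by
  have h : IsPrimitiveRoot (jC : ℂ) 3 := by
    simpa [jC] using Complex.isPrimitiveRoot_exp 3 (by norm_num)
  exact (IsPrimitiveRoot.coe_units_iff).mp h

lemma jC_ne_jC_sq : jC ≠ jC ^ 2 := fun h =>
  jC_isPrimitiveRoot.ne_one (by norm_num) (mul_eq_left.mp (sq jC ▸ h).symm)

lemma box_apply_le_one (q : ℂˣ) (α : BB) (c : ℂˣ) (lb : Fin 2 × ℂˣ) : box q α c lb ≤ 1 := by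
  cases α <;>
    simp only [box, Zv, Finsupp.add_apply, Finsupp.sub_apply, Finsupp.neg_apply,
      Finsupp.single_apply] <;>
    split_ifs <;> try omega
  rename_i hj hj₂
  exact absurd (mul_left_cancel (congrArg Prod.snd (hj.trans hj₂.symm))) jC_ne_jC_sq

/-- The `q`-exponent, on the node-`2` scale, of the variables of node `i` that occur with a
positive exponent in a box `⟦α⟧_c`; values at boxes without such variables are chosen so that
it is monotone in `α`. -/
def BB.qDeg : Fin 2 → BB → ℕ
  | 0, .b1 | 0, .b2 => 0
  | 0, .b3 | 0, .b4 | 0, .b4' | 0, .b3' => 6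
  | 0, .b2' | 0, .b1' => 12
  | 1, .b1 | 1, .b2 | 1, .b3 | 1, .b4 | 1, .b4' => 3
  | 1, .b3' | 1, .b2' | 1, .b1' => 9

lemma BB.qDeg_mono (i : Fin 2) {α β : BB} (h : α.rank ≤ β.rank) : α.qDeg i ≤ β.qDeg i := by
  fin_cases i <;> cases α <;> cases β <;> simp_all [BB.rank, BB.qDeg]

/-- The spectral parameter of a variable `Z_{i,b}` on the scale of node `2`: node-`1` parameters
enter node-`2` boxes cubed. -/
def twistedParam (lb : Fin 2 × ℂˣ) : ℂˣ := if lb.1 = 0 then lb.2 ^ 3 else lb.2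

lemma box_apply_pos {q c : ℂˣ} {α : BB} {lb : Fin 2 × ℂˣ} (h : 0 < box q α c lb) :
    twistedParam lb = c ^ 3 * q ^ α.qDeg lb.1 := by
  cases α <;>
    simp only [box, Zv, Finsupp.add_apply, Finsupp.sub_apply, Finsupp.neg_apply,
      Finsupp.single_apply] at h <;>
    split_ifs at h <;> try omega
  all_goals subst_vars
  all_goals simp_all [twistedParam, BB.qDeg, mul_pow, ← pow_mul,
    jC_isPrimitiveRoot.pow_eq_one_iff_dvd]

lemma IsTab1.rank_le {k : ℕ} {T : Fin k → BB} (hT : IsTab1 k T) {p p' : Fin k} (h : p ≤ p') :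
    (T p).rank ≤ (T p').rank := by
  obtain ⟨p, hp⟩ := p
  obtain ⟨p', hp'⟩ := p'
  simp only [Fin.mk_le_mk] at h
  induction p', h using Nat.le_induction with
  | base => rfl
  | succ n _ ih =>
    exact (ih (by omega)).trans ((hT n hp').elim (fun e => (congrArg BB.rank e).le) le_of_lt)

lemma IsTab1.eq_of_box_apply_pos {q : ℂˣ} (hq : ∀ n : ℕ, 0 < n → (q : ℂ) ^ n ≠ 1) {k : ℕ}
    {T : Fin k → BB} (hT : IsTab1 k T) (a : ℂˣ) {lb : Fin 2 × ℂˣ} {p p' : Fin k}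
    (hp : 0 < box q (T p) (a * q ^ (2 * (p : ℕ))) lb)
    (hp' : 0 < box q (T p') (a * q ^ (2 * (p' : ℕ))) lb) : p = p' := by
  have hparam (r : Fin k) (hr : 0 < box q (T r) (a * q ^ (2 * (r : ℕ))) lb) :
      twistedParam lb = a ^ 3 * q ^ (6 * r + (T r).qDeg lb.1) := by
    rw [box_apply_pos hr, mul_pow, ← pow_mul, mul_assoc, ← pow_add]
    ring_nf
  have hq₀ : orderOf q = 0 := by
    rw [← orderOf_units]
    exact orderOf_eq_zero_iff'.mpr hq
  have hexp : 6 * (p : ℕ) + (T p).qDeg lb.1 = 6 * p' + (T p').qDeg lb.1 :=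
    (pow_inj_iff_of_orderOf_eq_zero hq₀).mp
      (mul_left_cancel ((hparam p hp).symm.trans (hparam p' hp')))
  rcases le_total p p' with h | h <;>
  · have := BB.qDeg_mono lb.1 (hT.rank_le h)
    exact Fin.ext (by omega)

theorem m1_thin_general (q : ℂˣ) (hq : ∀ n : ℕ, 0 < n → (q : ℂ) ^ n ≠ 1)
    (k : ℕ) (T : Fin k → BB) (hT : IsTab1 k T) (a : ℂˣ) :
    ∀ lb : Fin 2 × ℂˣ, (m1 q T a) lb ≤ 1 := by
  intro lb
  rw [m1, Finsupp.finsetSum_apply]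
  exact Finset.sum_le_of_forall_le_of_pos_unique zero_le_one (fun p _ => box_apply_le_one q _ _ lb)
    fun p _ p' _ hp hp' => hT.eq_of_box_apply_pos hq a hp hp'

/-- Every monomial `m^{(1)}_{T,a}` with `T ∈ Tab(1,k)` is thin: all its exponents
are at most `1`. -/
theorem m1_thin (q : ℂˣ) (hq : ∀ n : ℕ, 0 < n → (q : ℂ) ^ n ≠ 1)
    (k : ℕ) (hk : 1 ≤ k) (T : Fin k → BB) (hT : IsTab1 k T) (a : ℂˣ) :
    ∀ lb : Fin 2 × ℂˣ, (m1 q T a) lb ≤ 1 :=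
  m1_thin_general q hq k T hT a
end
end
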